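/- Fix a generator t of ℤ/p and let x, z ∈ ℤⁿ satisfy Norm_t(x) = 0 and Norm_t(z) = 0. Then the cyclic subgroups of Γ = ℤⁿ ⋊_ρ ℤ/p generated by (x,t) and by (z,t) are conjugate in Γ if and only if x − z lies in the image of the endomorphism 1 − ρ(t) of ℤⁿ. -/

import Mathlib

/-!
Conjugating `(x, t)` by `(v, h)` gives `(v + ρ(h) x - ρ(t) v, t)`. Since `Norm_t(z) = 0`, the
order of `(z, t)` divides `p`, the order of its image `t` in `ℤ/p`; so the only element of
`⟨(z, t)⟩` lying over `t` is `(z, t)` itself, and the two subgroups are conjugate iff some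
conjugate of `(x, t)` equals `(z, t)`. As `h` is a power of `t`, `ρ(h) x - x` lies in the image
of `1 - ρ(t)`, which leaves exactly the condition on `x - z`.
-/

/-- The multiplicative group structure that `AddAut A` carried in the older Mathlib
(`e₁ * e₂ = e₂.trans e₁`, `1 = refl`, `e⁻¹ = e.symm`); Mathlib now makes `AddAut A` an
additive group instead. -/
instance addAutOldGroup {A : Type*} [Add A] : Group (AddAut A) where
  mul g h := AddEquiv.trans h g
  one := AddEquiv.refl _
  inv := AddEquiv.symm
  mul_assoc _ _ _ := rfl
  one_mul _ := rfl
  mul_one _ := rfl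
  inv_mul_cancel := AddEquiv.self_trans_symm

def addAutToMulAut {A : Type*} [AddGroup A] : AddAut A →* MulAut (Multiplicative A) where
  toFun e := AddEquiv.toMultiplicative e
  map_one' := rfl
  map_mul' _ _ := rfl

/-- The semidirect product `Γ = ℤⁿ ⋊_ρ ℤ/p` (written multiplicatively), with multiplication
`(x,g)·(x',g') = (x + ρ(g)x', g+g')`. -/
abbrev Gam (p n : ℕ) (ρ : Multiplicative (ZMod p) →* AddAut (Fin n → ℤ)) : Type :=
  (Multiplicative (Fin n → ℤ)) ⋊[addAutToMulAut.comp ρ] (Multiplicative (ZMod p))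

open Finset Multiplicative

namespace SemidirectProduct

theorem mk_pow {N G : Type*} [CommGroup N] [Group G] {φ : G →* MulAut N} (n : N) (g : G)
    (k : ℕ) : (⟨n, g⟩ : N ⋊[φ] G) ^ k = ⟨∏ i ∈ range k, φ (g ^ i) n, g ^ k⟩ := by
  induction k with
  | zero => ext <;> simp only [pow_zero, one_left, one_right, prod_range_zero]
  | succ k ih =>
    rw [pow_succ, ih]
    ext
    · simp only [mul_left, prod_range_succ]
    · simp only [mul_right, pow_succ]

theorem conj_mk {N G : Type*} [Group N] [CommGroup G] {φ : G →* MulAut N}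
    (γ : N ⋊[φ] G) (n : N) (g : G) :
    MulAut.conj γ ⟨n, g⟩ = ⟨γ.left * φ γ.right n * φ g γ.left⁻¹, g⟩ := by
  ext
  · simp only [MulAut.conj_apply, mul_left, inv_left, mul_right]
    rw [← MulAut.mul_apply, ← map_mul, mul_inv_cancel_comm, mul_assoc]
  · simp only [MulAut.conj_apply, mul_right, inv_right, mul_inv_cancel_comm]

end SemidirectProduct

theorem eq_of_mem_zpowers_of_map_eq {G H : Type*} [Group G] [Group H] (f : G →* H) {b c : G}
    (hb : orderOf b ∣ orderOf (f b)) (hc : c ∈ Subgroup.zpowers b) (hf : f c = f b) :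
    c = b := by
  obtain ⟨k, rfl⟩ := hc
  have hfk : f b ^ (k - 1) = 1 := by rw [zpow_sub_one, ← map_zpow, hf, mul_inv_cancel]
  have hk : b ^ (k - 1) = 1 :=
    orderOf_dvd_iff_zpow_eq_one.1 ((Int.natCast_dvd_natCast.2 hb).trans
      (orderOf_dvd_iff_zpow_eq_one.2 hfk))
  rwa [zpow_sub_one, mul_inv_eq_one] at hk

theorem AddAut.zpow_apply_sub_mem_range {M : Type*} [AddCommGroup M] (r : AddAut M) (m : ℤ)
    (y : M) : (r ^ m) y - y ∈ (AddMonoidHom.id M - r.toAddMonoidHom).range := by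
  set R := (AddMonoidHom.id M - r.toAddMonoidHom).range
  have hR (u : M) : u - r u ∈ R := ⟨u, rfl⟩
  induction m using Int.induction_on with
  | zero =>
    rw [zpow_zero]
    change y - y ∈ R
    rw [sub_self]
    exact zero_mem R
  | succ m ih =>
    have h := sub_mem ih (hR ((r ^ (m : ℤ)) y))
    rw [sub_sub_sub_cancel_left] at h
    rw [add_comm, zpow_one_add]
    exact h
  | pred m ih =>
    have h := add_mem ih (hR (r⁻¹ ((r ^ (-(m : ℤ))) y)))
    rw [show r (r⁻¹ ((r ^ (-(m : ℤ))) y)) = (r ^ (-(m : ℤ))) y from r.apply_symm_apply _,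
      sub_add_sub_cancel'] at h
    rw [sub_eq_neg_add (-(m : ℤ)), zpow_add, zpow_neg_one]
    exact h

namespace Gam

variable {p n : ℕ} {ρ : Multiplicative (ZMod p) →* AddAut (Fin n → ℤ)}

theorem mk_pow_eq_one_of_sum_eq_zero {z : Fin n → ℤ} {t : ZMod p}
    (hz : ∑ i ∈ range p, (ρ (ofAdd t) ^ i) z = 0) :
    (⟨ofAdd z, ofAdd t⟩ : Gam p n ρ) ^ p = 1 := by
  have hterm (i : ℕ) :
      (addAutToMulAut.comp ρ) (ofAdd t ^ i) (ofAdd z) = ofAdd ((ρ (ofAdd t) ^ i) z) := by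
    rw [← map_pow ρ]
    rfl
  rw [SemidirectProduct.mk_pow]
  refine SemidirectProduct.ext ?_ ?_
  · simp only [hterm, ← ofAdd_sum, hz, ofAdd_zero, SemidirectProduct.one_left]
  · rw [← ofAdd_nsmul, nsmul_eq_mul, ZMod.natCast_self, zero_mul]
    rfl

theorem conj_mk (γ : Gam p n ρ) (y : Fin n → ℤ) (s : ZMod p) :
    MulAut.conj γ ⟨ofAdd y, ofAdd s⟩ =
      ⟨ofAdd (γ.left.toAdd + ρ γ.right y - ρ (ofAdd s) γ.left.toAdd), ofAdd s⟩ := by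
  rw [SemidirectProduct.conj_mk]
  congr 1
  change ofAdd (γ.left.toAdd + ρ γ.right y + ρ (ofAdd s) (-γ.left.toAdd)) = _
  rw [map_neg, ← sub_eq_add_neg]

theorem exists_conj_mk_eq_iff {x z : Fin n → ℤ} {t : ZMod p}
    (ht : AddSubgroup.zmultiples t = ⊤) :
    (∃ γ : Gam p n ρ, MulAut.conj γ ⟨ofAdd x, ofAdd t⟩ = ⟨ofAdd z, ofAdd t⟩) ↔
      ∃ w : Fin n → ℤ, x - z = w - ρ (ofAdd t) w := by
  set r := ρ (ofAdd t)
  constructor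
  · rintro ⟨γ, hconj⟩
    obtain ⟨m, hm⟩ :=
      AddSubgroup.mem_zmultiples_iff.1 (ht ▸ AddSubgroup.mem_top γ.right.toAdd)
    rw [conj_mk, ← ofAdd_toAdd γ.right, ← hm, ofAdd_zsmul, map_zpow] at hconj
    have hz : γ.left.toAdd + (r ^ m) x - r γ.left.toAdd = z :=
      congrArg (fun g => g.left.toAdd) hconj
    obtain ⟨w, hw⟩ := sub_mem (neg_mem (AddAut.zpow_apply_sub_mem_range r m x))
      (AddMonoidHom.mem_range.2 ⟨γ.left.toAdd, rfl⟩)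
    change w - r w = -((r ^ m) x - x) - (γ.left.toAdd - r γ.left.toAdd) at hw
    refine ⟨w, ?_⟩
    rw [← hz, hw]
    abel
  · rintro ⟨w, hw⟩
    refine ⟨⟨ofAdd (-w), 1⟩, ?_⟩
    rw [conj_mk, map_one]
    congr 2
    change -w + x - r (-w) = z
    rw [map_neg, ← sub_sub_cancel x z, hw]
    abel

end Gam

theorem stmt5_general (p n : ℕ)
    (ρ : Multiplicative (ZMod p) →* AddAut (Fin n → ℤ))
    (t : ZMod p) (ht : AddSubgroup.zmultiples t = ⊤)
    (x z : Fin n → ℤ)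
    (hz : ∑ i ∈ Finset.range p, ((ρ (Multiplicative.ofAdd t)) ^ i) z = 0) :
    (∃ γ : Gam p n ρ,
        (Subgroup.zpowers
            (⟨Multiplicative.ofAdd x, Multiplicative.ofAdd t⟩ : Gam p n ρ)).map
            (MulAut.conj γ).toMonoidHom =
          Subgroup.zpowers
            (⟨Multiplicative.ofAdd z, Multiplicative.ofAdd t⟩ : Gam p n ρ)) ↔
      ∃ w : Fin n → ℤ, x - z = w - ρ (Multiplicative.ofAdd t) w := by
  rw [← Gam.exists_conj_mk_eq_iff ht]
  have hb : orderOf (⟨ofAdd z, ofAdd t⟩ : Gam p n ρ) ∣ orderOf (ofAdd t) := by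
    rw [orderOf_ofAdd_eq_addOrderOf, addOrderOf_eq_card_of_zmultiples_eq_top ht, Nat.card_zmod]
    exact orderOf_dvd_of_pow_eq_one (Gam.mk_pow_eq_one_of_sum_eq_zero hz)
  simp only [MonoidHom.map_zpowers, MulEquiv.coe_toMonoidHom]
  refine exists_congr fun γ => ⟨fun hγ => ?_, fun hγ => hγ ▸ rfl⟩
  refine eq_of_mem_zpowers_of_map_eq SemidirectProduct.rightHom hb
    (hγ ▸ Subgroup.mem_zpowers _) ?_
  rw [Gam.conj_mk]
  rfl

/-- for a generator `t` of `ℤ/p` and `x, z ∈ ℤⁿ` with `Norm_t(x) = Norm_t(z) = 0`,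
the cyclic subgroups of `Γ = ℤⁿ ⋊_ρ ℤ/p` generated by `(x,t)` and `(z,t)` are conjugate in `Γ`
if and only if `x − z` lies in the image of `1 − ρ(t)`. -/
theorem stmt5 (p n : ℕ) [Fact p.Prime]
    (ρ : Multiplicative (ZMod p) →* AddAut (Fin n → ℤ))
    (t : ZMod p) (ht : AddSubgroup.zmultiples t = ⊤)
    (x z : Fin n → ℤ)
    (hx : ∑ i ∈ Finset.range p, ((ρ (Multiplicative.ofAdd t)) ^ i) x = 0)
    (hz : ∑ i ∈ Finset.range p, ((ρ (Multiplicative.ofAdd t)) ^ i) z = 0) :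
    (∃ γ : Gam p n ρ,
        (Subgroup.zpowers
            (⟨Multiplicative.ofAdd x, Multiplicative.ofAdd t⟩ : Gam p n ρ)).map
            (MulAut.conj γ).toMonoidHom =
          Subgroup.zpowers
            (⟨Multiplicative.ofAdd z, Multiplicative.ofAdd t⟩ : Gam p n ρ)) ↔
      ∃ w : Fin n → ℤ, x - z = w - ρ (Multiplicative.ofAdd t) w :=
  stmt5_general p n ρ t ht x z hz
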